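/- arXiv:math/0405372 — 6 statements merged into one kernel-verified Lean document; each statement's English description precedes it below -/
import Mathlib

section
/- For every n ∈ ℤ there exists k ∈ ℕ such that (S*)^k e_n belongs to L = span{e_k : −2D+1 ≤ k ≤ 0}. -/
/-!
`S*` maps `e_n` into the span of the `e_m` with `n - 2D + 1 ≤ 2m ≤ n`, so it roughly halves
indices: it leaves `L` invariant and moves every index outside `[-2D+1, 0]` strictly closer to
that interval. For an invariant `L`, the vectors eventually mapped into `L` form the submodule
`⨆ k, (S* ^ k)⁻¹ L`, which contains `x` as soon as it contains `S* x`; strong induction on the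
distance of `n` to `[-2D+1, 0]` then puts every `e_n` in it.
-/

open ContinuousLinearMap

namespace Submodule

variable {R M : Type*} [Semiring R] [AddCommMonoid M] [Module R M]
  {T : Module.End R M} {L : Submodule R M}

theorem monotone_comap_pow (hL : L ≤ L.comap T) : Monotone fun k : ℕ => L.comap (T ^ k) :=
  monotone_nat_of_le_succ fun k x hx => by
    rw [mem_comap, pow_succ', Module.End.mul_apply]
    exact hL hx

theorem mem_iSup_comap_pow_iff (hL : L ≤ L.comap T) {x : M} :
    x ∈ ⨆ k : ℕ, L.comap (T ^ k) ↔ ∃ k : ℕ, (T ^ k) x ∈ L :=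
  mem_iSup_of_directed _ (monotone_comap_pow hL).directed_le

theorem mem_iSup_comap_pow_of_apply_mem (hL : L ≤ L.comap T) {x : M}
    (hx : T x ∈ ⨆ k : ℕ, L.comap (T ^ k)) : x ∈ ⨆ k : ℕ, L.comap (T ^ k) := by
  obtain ⟨k, hk⟩ := (mem_iSup_comap_pow_iff hL).1 hx
  refine (mem_iSup_comap_pow_iff hL).2 ⟨k + 1, ?_⟩
  rwa [pow_succ, Module.End.mul_apply]

theorem exists_pow_apply_mem_span {ι : Type*} (e : ι → M) (s : Set ι) (c : ι → Set ι)
    (μ : ι → ℕ) (hT : ∀ n, T (e n) ∈ span R (e '' c n)) (hs : ∀ n ∈ s, c n ⊆ s)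
    (hμ : ∀ n ∉ s, ∀ m ∈ c n, μ m < μ n) (n : ι) :
    ∃ k : ℕ, (T ^ k) (e n) ∈ span R (e '' s) := by
  set L := span R (e '' s)
  have hL : L ≤ L.comap T := span_le.2 <| by
    rintro _ ⟨n, hn, rfl⟩
    exact span_mono (Set.image_mono (hs n hn)) (hT n)
  refine (mem_iSup_comap_pow_iff hL).1 ?_
  induction hN : μ n using Nat.strong_induction_on generalizing n with
  | _ N ih =>
    by_cases hn : n ∈ s
    · exact (mem_iSup_comap_pow_iff hL).2 ⟨0, subset_span ⟨n, hn, rfl⟩⟩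
    · refine mem_iSup_comap_pow_of_apply_mem hL (span_le.2 ?_ (hT n))
      rintro _ ⟨m, hm, rfl⟩
      exact ih (μ m) (hN ▸ hμ n hn m hm) m rfl

end Submodule

theorem lp.mem_span_single_of_eq_zero_off_finite {ι 𝕜 : Type*} [DecidableEq ι] [NormedRing 𝕜]
    {p : ENNReal} (ξ : lp (fun _ : ι => 𝕜) p) {s : Set ι} (hs : s.Finite)
    (hξ : ∀ i ∉ s, ξ i = 0) :
    ξ ∈ Submodule.span 𝕜 ((fun i => lp.single p i (1 : 𝕜)) '' s) := by
  have hsum : ξ = ∑ i ∈ hs.toFinset, ξ i • lp.single p i (1 : 𝕜) := by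
    ext j
    simp only [← lp.single_smul, smul_eq_mul, mul_one, lp.coeFn_sum, Finset.sum_apply,
      lp.single_apply, Finset.sum_pi_single]
    split_ifs with hj
    · rfl
    · exact hξ j (mt hs.mem_toFinset.2 hj)
  rw [hsum]
  exact Submodule.sum_mem _ fun i hi =>
    Submodule.smul_mem _ _ (Submodule.subset_span ⟨i, hs.mem_toFinset.1 hi, rfl⟩)

/-- The support of `S* e_n`: the `m` for which `a (n - 2 * m)` can be nonzero. -/
def adjointSupport (D : ℕ) (n : ℤ) : Set ℤ :=
  {m | n - 2 * D + 1 ≤ 2 * m ∧ 2 * m ≤ n}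

theorem adjointSupport_finite (D : ℕ) (n : ℤ) : (adjointSupport D n).Finite :=
  (Set.finite_Icc ((n - 2 * D) / 2) (n / 2)).subset fun m hm => by
    simp only [adjointSupport, Set.mem_ofPred_eq] at hm
    simp only [Set.mem_Icc]
    omega

theorem adjointSupport_subset_Icc (D : ℕ) {n : ℤ} (hn : n ∈ Set.Icc (-(2 * (D : ℤ)) + 1) 0) :
    adjointSupport D n ⊆ Set.Icc (-(2 * (D : ℤ)) + 1) 0 := fun m hm => by
  simp only [adjointSupport, Set.mem_ofPred_eq, Set.mem_Icc] at hm hn ⊢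
  omega

/-- `n.toNat + (1 - 2 * D - n).toNat` is the distance from `n` to `[-2D+1, 0]`. -/
theorem toNat_add_toNat_lt_of_mem_adjointSupport (D : ℕ) {n m : ℤ}
    (hn : n ∉ Set.Icc (-(2 * (D : ℤ)) + 1) 0) (hm : m ∈ adjointSupport D n) :
    m.toNat + (1 - 2 * D - m).toNat < n.toNat + (1 - 2 * D - n).toNat := by
  simp only [adjointSupport, Set.mem_ofPred_eq, Set.mem_Icc] at hm hn
  omega

theorem adjoint_single_mem_span (D : ℕ) (a : ℤ → ℂ)
    (ha : ∀ j : ℤ, j < 0 ∨ (2 * D : ℤ) ≤ j → a j = 0)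
    (S : lp (fun _ : ℤ => ℂ) 2 →L[ℂ] lp (fun _ : ℤ => ℂ) 2)
    (hSadj : ∀ (ξ : lp (fun _ : ℤ => ℂ) 2) (n : ℤ),
      (adjoint S ξ : ∀ _ : ℤ, ℂ) n =
        ∑' k : ℤ, (starRingEnd ℂ) (a (k - 2 * n)) * (ξ : ∀ _ : ℤ, ℂ) k) (n : ℤ) :
    adjoint S (lp.single 2 n (1 : ℂ)) ∈
      Submodule.span ℂ ((fun j : ℤ => lp.single 2 j (1 : ℂ)) '' adjointSupport D n) := by
  refine lp.mem_span_single_of_eq_zero_off_finite _ (adjointSupport_finite D n) fun m hm => ?_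
  have hcoord : (adjoint S (lp.single 2 n (1 : ℂ)) : ∀ _ : ℤ, ℂ) m =
      (starRingEnd ℂ) (a (n - 2 * m)) := by
    rw [hSadj, tsum_eq_single n fun k hk => by rw [lp.single_apply_ne 2 n _ hk, mul_zero],
      lp.single_apply_self, mul_one]
  rw [hcoord, ha _ (by simp only [adjointSupport, Set.mem_ofPred_eq] at hm; omega), map_zero]

theorem cuntz_wavelet_stmt5_general (D : ℕ) (a : ℤ → ℂ)
    (ha : ∀ j : ℤ, j < 0 ∨ (2 * D : ℤ) ≤ j → a j = 0)
    (S : lp (fun _ : ℤ => ℂ) 2 →L[ℂ] lp (fun _ : ℤ => ℂ) 2)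
    (hSadj : ∀ (ξ : lp (fun _ : ℤ => ℂ) 2) (n : ℤ),
      (adjoint S ξ : ∀ _ : ℤ, ℂ) n =
        ∑' k : ℤ, (starRingEnd ℂ) (a (k - 2 * n)) * (ξ : ∀ _ : ℤ, ℂ) k) :
    ∀ n : ℤ, ∃ k : ℕ,
      ((adjoint S) ^ k) (lp.single 2 n (1 : ℂ)) ∈ Submodule.span ℂ
        ((fun j : ℤ => lp.single 2 j (1 : ℂ)) '' Set.Icc (-(2 * (D : ℤ)) + 1) 0) := by
  intro n
  obtain ⟨k, hk⟩ := Submodule.exists_pow_apply_mem_span (T := (adjoint S : _ →ₗ[ℂ] _))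
    (fun j : ℤ => lp.single 2 j (1 : ℂ)) _ (adjointSupport D)
    (fun j => j.toNat + (1 - 2 * D - j).toNat) (adjoint_single_mem_span D a ha S hSadj)
    (fun _ => adjointSupport_subset_Icc D)
    (fun _ hn _ => toNat_add_toNat_lt_of_mem_adjointSupport D hn) n
  exact ⟨k, by rwa [← toLinearMap_pow] at hk⟩

/-- For the operator `S` on `ℓ²(ℤ)` with `(Sξ)_n = ∑_k a_{n−2k} ξ_k`
(whose adjoint is `(S*ξ)_n = ∑_k conj(a_{k−2n}) ξ_k`), for every `n ∈ ℤ` there is a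
`k ∈ ℕ` with `(S*)^k e_n ∈ L = span{e_j : −2D+1 ≤ j ≤ 0}`. -/
theorem cuntz_wavelet_stmt5 (D : ℕ) (hD : 1 ≤ D) (a : ℤ → ℂ)
    (ha : ∀ j : ℤ, j < 0 ∨ (2 * D : ℤ) ≤ j → a j = 0)
    (S : lp (fun _ : ℤ => ℂ) 2 →L[ℂ] lp (fun _ : ℤ => ℂ) 2)
    (hS : ∀ (ξ : lp (fun _ : ℤ => ℂ) 2) (n : ℤ),
      (S ξ : ∀ _ : ℤ, ℂ) n = ∑' k : ℤ, a (n - 2 * k) * (ξ : ∀ _ : ℤ, ℂ) k)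
    (hSadj : ∀ (ξ : lp (fun _ : ℤ => ℂ) 2) (n : ℤ),
      (adjoint S ξ : ∀ _ : ℤ, ℂ) n =
        ∑' k : ℤ, (starRingEnd ℂ) (a (k - 2 * n)) * (ξ : ∀ _ : ℤ, ℂ) k) :
    ∀ n : ℤ, ∃ k : ℕ,
      ((adjoint S) ^ k) (lp.single 2 n (1 : ℂ)) ∈ Submodule.span ℂ
        ((fun j : ℤ => lp.single 2 j (1 : ℂ)) '' Set.Icc (-(2 * (D : ℤ)) + 1) 0) :=
  cuntz_wavelet_stmt5_general D a ha S hSadj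
end

section
/- For every k ≥ 1 and every (i_1,…,i_k) ∈ {0,1}^k, the inequality ‖S_{i_k}*⋯S_{i_1}* e_0‖² ≥ |a_0|^{2·#{j : i_j = 0}} · |a_{2D−1}|^{2·#{j : i_j = 1}} holds, where e_0 is the constant function 1 in L²(T). Equivalently, the measure μ_0 with μ_0([ξ, ξ+2^{−k})) = ‖S_{i_k}*⋯S_{i_1}* e_0‖², ξ = i_1/2 + ⋯ + i_k/2^k, satisfies μ_0([ξ, ξ+2^{−k})) ≥ |a_0|^{2·#{j : i_j = 0}} · |a_{2D−1}|^{2·#{j : i_j = 1}}. -/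
open Complex Finset MeasureTheory AddCircle ContinuousLinearMap

/-- The word `S_{i_1} ⋯ S_{i_k}` (leftmost factor `S_{i_1}`); its adjoint is
`S_{i_k}* ⋯ S_{i_1}*`. -/
noncomputable def cuntzWord {H : Type*} [NormedAddCommGroup H] [InnerProductSpace ℂ H]
    (S : Fin 2 → H →L[ℂ] H) {k : ℕ} (i : Fin k → Fin 2) : H →L[ℂ] H :=
  ((List.ofFn i).map S).prod

/-- The dyadic rational `ξ = i₁/2 + ⋯ + i_k/2^k`. -/
noncomputable def dyadicVal {k : ℕ} (i : Fin k → Fin 2) : ℝ :=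
  ∑ j : Fin k, ((i j : ℕ) : ℝ) * (2⁻¹ : ℝ) ^ ((j : ℕ) + 1)

/-!
Identify an analytic trigonometric polynomial on the circle with a polynomial `p`, via `z ↦ p(z)`.
Each `S_j` sends `p` to `m_j(z) p(z²)`, which is again analytic, with constant term
`m_j(0) p(0)`. Hence `S_{i_1} ⋯ S_{i_k} e₀` is analytic with constant term
`∏ m_{i_l}(0) = a₀^{N₀} conj(a_{2D-1})^{N₁}`. That constant term is
`⟨e₀, S_{i_1} ⋯ S_{i_k} e₀⟩ = ⟨S_{i_k}* ⋯ S_{i_1}* e₀, e₀⟩`, and Cauchy–Schwarz with `‖e₀‖ = 1`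
gives the bound.
-/

open Polynomial
open scoped ComplexConjugate

section Circle

variable {T : ℝ}

lemma fourier_natCast_eq_pow (n : ℕ) (z : AddCircle T) :
    fourier (n : ℤ) z = (toCircle z : ℂ) ^ n := by
  rw [fourier_apply, natCast_zsmul, toCircle_nsmul, Circle.coe_pow]

variable [Fact (0 < T)]

lemma integral_fourier_haarAddCircle (n : ℤ) :
    ∫ z, fourier n z ∂(haarAddCircle (T := T)) = if n = 0 then 1 else 0 := by
  split_ifs with hn
  · simp [hn]
  · exact integral_eq_zero_of_add_right_eq_neg (fourier_add_half_inv_index hn Fact.out)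

lemma integral_eval_toCircle (p : ℂ[X]) :
    ∫ z, p.eval (toCircle z : ℂ) ∂(haarAddCircle (T := T)) = p.coeff 0 := by
  simp_rw [eval_eq_sum_range, ← fourier_natCast_eq_pow]
  rw [integral_finsetSum]
  · simp only [integral_const_mul, integral_fourier_haarAddCircle, Nat.cast_eq_zero, mul_ite,
      mul_one, mul_zero, sum_ite_eq', mem_range, Nat.zero_lt_succ, if_true]
  · exact fun n _ => ((fourier _).continuous.integrable_of_hasCompactSupport
      (HasCompactSupport.of_compactSpace _)).const_mul _

lemma AddCircle.measurePreserving_add_self :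
    MeasurePreserving (fun z : AddCircle T => z + z) haarAddCircle haarAddCircle := by
  simpa [two_zsmul] using Measure.measurePreserving_zsmul haarAddCircle (two_ne_zero (α := ℤ))

end Circle

lemma Polynomial.coeff_zero_mul_comp_X_pow {R : Type*} [CommSemiring R] (p q : R[X]) {n : ℕ}
    (hn : n ≠ 0) : (p * q.comp (X ^ n)).coeff 0 = p.coeff 0 * q.coeff 0 := by
  simp [coeff_zero_eq_eval_zero, eval_comp, hn]

section L2

variable {α : Type*} [MeasurableSpace α] {μ : Measure α}

lemma MeasureTheory.L2.inner_eq_integral_of_ae_eq_one {e : Lp ℂ 2 μ}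
    (he : ⇑e =ᵐ[μ] fun _ => 1) (f : Lp ℂ 2 μ) : inner ℂ e f = ∫ z, f z ∂μ := by
  rw [L2.inner_def]
  refine integral_congr_ae ?_
  filter_upwards [he] with z hz
  simp [hz]

lemma MeasureTheory.L2.norm_eq_one_of_ae_eq_one [IsProbabilityMeasure μ] {e : Lp ℂ 2 μ}
    (he : ⇑e =ᵐ[μ] fun _ => 1) : ‖e‖ = 1 := by
  have h := inner_self_eq_norm_sq (𝕜 := ℂ) e
  rw [L2.inner_eq_integral_of_ae_eq_one he, integral_congr_ae he, integral_const, probReal_univ,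
    one_smul, RCLike.one_re] at h
  exact (pow_eq_one_iff_of_nonneg (norm_nonneg e) two_ne_zero).mp h.symm

end L2

lemma prod_comp_fin_two {M : Type*} [CommMonoid M] {k : ℕ} (i : Fin k → Fin 2) (g : Fin 2 → M) :
    ∏ l, g (i l) = g 0 ^ #{l | i l = 0} * g 1 ^ #{l | i l = 1} := by
  rw [← prod_fiberwise univ i, Fin.prod_univ_two]
  congr 1 <;> exact (prod_congr rfl fun l hl => by rw [(mem_filter.mp hl).2]).trans (prod_const _)

lemma ContinuousLinearMap.norm_inner_apply_le_norm_adjoint_apply {H : Type*}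
    [NormedAddCommGroup H] [InnerProductSpace ℂ H] [CompleteSpace H] (A : H →L[ℂ] H) {e : H}
    (he : ‖e‖ = 1) : ‖inner ℂ e (A e)‖ ≤ ‖adjoint A e‖ :=
  calc ‖inner ℂ e (A e)‖ = ‖inner ℂ (adjoint A e) e‖ := by rw [adjoint_inner_left]
    _ ≤ ‖adjoint A e‖ * ‖e‖ := norm_inner_le_norm _ _
    _ = ‖adjoint A e‖ := by rw [he, mul_one]

section DilationWord

variable {T : ℝ} [Fact (0 < T)] {ι : Type*} (P : ι → ℂ[X])

/-- The polynomial of `S_{j₁} ⋯ S_{j_n} e₀` when `(S_j f)(z) = P_j(z) f(z²)` and `e₀ = 1`. -/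
noncomputable def wordPoly (L : List ι) : ℂ[X] :=
  L.foldr (fun j q => P j * q.comp (X ^ 2)) 1

@[simp] lemma wordPoly_nil : wordPoly P [] = 1 := rfl

@[simp] lemma wordPoly_cons (j : ι) (L : List ι) :
    wordPoly P (j :: L) = P j * (wordPoly P L).comp (X ^ 2) := rfl

lemma coeff_zero_wordPoly (L : List ι) :
    (wordPoly P L).coeff 0 = (L.map fun j => (P j).coeff 0).prod := by
  induction L with
  | nil => simp
  | cons j L ih => rw [wordPoly_cons, coeff_zero_mul_comp_X_pow _ _ two_ne_zero, ih]; rfl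

variable {P} {S : ι → Lp ℂ 2 (@haarAddCircle T _) →L[ℂ] Lp ℂ 2 (@haarAddCircle T _)}
  {e₀ : Lp ℂ 2 (@haarAddCircle T _)}

lemma ae_eq_eval_wordPoly
    (hS : ∀ i f, ⇑(S i f) =ᵐ[haarAddCircle] fun z => (P i).eval (toCircle z : ℂ) * f (z + z))
    (he₀ : ⇑e₀ =ᵐ[haarAddCircle] fun _ => 1) (L : List ι) :
    ⇑((L.map S).prod e₀) =ᵐ[haarAddCircle] fun z => (wordPoly P L).eval (toCircle z : ℂ) := by
  induction L with
  | nil => simpa using he₀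
  | cons j L ih =>
    filter_upwards [hS j ((L.map S).prod e₀),
      measurePreserving_add_self.quasiMeasurePreserving.ae_eq_comp ih] with z hSz hz
    simp only [Function.comp_apply] at hz
    calc _ = (P j).eval (toCircle z : ℂ) * (L.map S).prod e₀ (z + z) := hSz
      _ = _ := by
        rw [hz, wordPoly_cons, eval_mul, eval_comp, eval_pow, eval_X, toCircle_add,
          Circle.coe_mul, sq]

lemma norm_prod_coeff_zero_le_norm_adjoint_word
    (hS : ∀ i f, ⇑(S i f) =ᵐ[haarAddCircle] fun z => (P i).eval (toCircle z : ℂ) * f (z + z))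
    (he₀ : ⇑e₀ =ᵐ[haarAddCircle] fun _ => 1) (L : List ι) :
    ‖(L.map fun j => (P j).coeff 0).prod‖ ≤ ‖adjoint (L.map S).prod e₀‖ := by
  rw [← coeff_zero_wordPoly, ← integral_eval_toCircle (T := T),
    ← integral_congr_ae (ae_eq_eval_wordPoly hS he₀ L),
    ← L2.inner_eq_integral_of_ae_eq_one he₀]
  exact norm_inner_apply_le_norm_adjoint_apply _ (L2.norm_eq_one_of_ae_eq_one he₀)

end DilationWord

theorem cuntz_wavelet_stmt11_general (D : ℕ) (hD : 1 ≤ D) (a : ℤ → ℂ)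
    (m : Fin 2 → AddCircle (1 : ℝ) → ℂ)
    (hm₀ : ∀ z, m 0 z = ∑ k ∈ Finset.range (2 * D), a k * fourier (k : ℤ) z)
    (hm₁ : ∀ z, m 1 z = ∑ k ∈ Finset.range (2 * D),
        (-1 : ℂ) ^ k * (starRingEnd ℂ) (a (2 * (D : ℤ) - 1 - k)) * fourier (k : ℤ) z)
    (S : Fin 2 → Lp ℂ 2 (@haarAddCircle (1 : ℝ) _) →L[ℂ] Lp ℂ 2 (@haarAddCircle (1 : ℝ) _))
    (hS : ∀ (i : Fin 2) (f : Lp ℂ 2 (@haarAddCircle (1 : ℝ) _)),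
      ⇑(S i f) =ᵐ[@haarAddCircle (1 : ℝ) _] fun z => m i z * f (z + z))
    (e₀ : Lp ℂ 2 (@haarAddCircle (1 : ℝ) _))
    (he₀ : ⇑e₀ =ᵐ[@haarAddCircle (1 : ℝ) _] fun _ => (1 : ℂ)) :
    (∀ (k : ℕ), 1 ≤ k → ∀ i : Fin k → Fin 2,
      ‖a 0‖ ^ (2 * (Finset.univ.filter fun l => i l = 0).card) *
        ‖a (2 * (D : ℤ) - 1)‖ ^ (2 * (Finset.univ.filter fun l => i l = 1).card)
        ≤ ‖adjoint (cuntzWord S i) e₀‖ ^ 2) ∧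
    (∀ μ₀ : Measure ℝ,
      (∀ (k : ℕ), 1 ≤ k → ∀ i : Fin k → Fin 2,
        μ₀ (Set.Ico (dyadicVal i) (dyadicVal i + (2⁻¹ : ℝ) ^ k)) =
          ENNReal.ofReal (‖adjoint (cuntzWord S i) e₀‖ ^ 2)) →
      ∀ (k : ℕ), 1 ≤ k → ∀ i : Fin k → Fin 2,
        ENNReal.ofReal
            (‖a 0‖ ^ (2 * (Finset.univ.filter fun l => i l = 0).card) *
              ‖a (2 * (D : ℤ) - 1)‖ ^
                (2 * (Finset.univ.filter fun l => i l = 1).card))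
          ≤ μ₀ (Set.Ico (dyadicVal i) (dyadicVal i + (2⁻¹ : ℝ) ^ k))) := by
  let c : Fin 2 → ℕ → ℂ := ![fun k => a k, fun k => (-1) ^ k * conj (a (2 * D - 1 - k))]
  let P : Fin 2 → ℂ[X] := fun j => ∑ k ∈ range (2 * D), C (c j k) * X ^ k
  have hm : ∀ j z, m j z = (P j).eval (toCircle z : ℂ) := by
    refine Fin.forall_fin_two.mpr ⟨fun z => ?_, fun z => ?_⟩ <;>
    · simp only [hm₀, hm₁, P, eval_finsetSum]
      refine sum_congr rfl fun k _ => ?_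
      rw [fourier_natCast_eq_pow]
      simp [c]
  have hSP : ∀ j f, ⇑(S j f) =ᵐ[haarAddCircle] fun z => (P j).eval (toCircle z : ℂ) * f (z + z) :=
    fun j f => (hS j f).trans (.of_forall fun z => by simp only [hm])
  have hP : ∀ j, ‖(P j).coeff 0‖ = ![‖a 0‖, ‖a (2 * D - 1)‖] j := by
    intro j
    fin_cases j <;> simp [P, c, show 0 < D from hD]
  have main : ∀ k (i : Fin k → Fin 2), ‖a 0‖ ^ (2 * #{l | i l = 0}) *
      ‖a (2 * D - 1)‖ ^ (2 * #{l | i l = 1}) ≤ ‖adjoint (cuntzWord S i) e₀‖ ^ 2 := by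
    intro k i
    have h := norm_prod_coeff_zero_le_norm_adjoint_word hSP he₀ (List.ofFn i)
    rw [List.map_ofFn, List.prod_ofFn, norm_prod] at h
    simp only [Function.comp_apply, hP, prod_comp_fin_two, Matrix.cons_val_zero,
      Matrix.cons_val_one, Matrix.cons_val_fin_one] at h
    calc _ = (‖a 0‖ ^ #{l | i l = 0} * ‖a (2 * D - 1)‖ ^ #{l | i l = 1}) ^ 2 := by ring
      _ ≤ _ := pow_le_pow_left₀ (by positivity) h 2
  exact ⟨fun k _ i => main k i,
    fun μ₀ hμ k hk i => (hμ k hk i).symm ▸ ENNReal.ofReal_le_ofReal (main k i)⟩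

/-- Under the quadrature condition (Q) and the normalization
`∑ a_k = √2`, for every `k ≥ 1` and digits `i₁,…,i_k ∈ {0,1}` one has
`‖S_{i_k}*⋯S_{i_1}* e₀‖² ≥ |a₀|^{2 N₀} |a_{2D−1}|^{2 N₁}` where `e₀` is the constant
function `1` in `L²(T)` and `N_j = #{l : i_l = j}`; equivalently, any measure `μ₀`
with `μ₀([ξ, ξ+2^{−k})) = ‖S_{i_k}*⋯S_{i_1}* e₀‖²` obeys the same lower bound. -/
theorem cuntz_wavelet_stmt11 (D : ℕ) (hD : 1 ≤ D) (a : ℤ → ℂ)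
    (ha : ∀ j : ℤ, j < 0 ∨ (2 * D : ℤ) ≤ j → a j = 0)
    (hQ : ∀ ℓ : ℤ, ∑ k ∈ Finset.Icc (0 : ℤ) (2 * D - 1),
        (starRingEnd ℂ) (a k) * a (k + 2 * ℓ) = if ℓ = 0 then 1 else 0)
    (hnorm : ∑ k ∈ Finset.Icc (0 : ℤ) (2 * D - 1), a k = (Real.sqrt 2 : ℂ))
    (m : Fin 2 → AddCircle (1 : ℝ) → ℂ)
    (hm₀ : ∀ z, m 0 z = ∑ k ∈ Finset.range (2 * D), a k * fourier (k : ℤ) z)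
    (hm₁ : ∀ z, m 1 z = ∑ k ∈ Finset.range (2 * D),
        (-1 : ℂ) ^ k * (starRingEnd ℂ) (a (2 * (D : ℤ) - 1 - k)) * fourier (k : ℤ) z)
    (S : Fin 2 → Lp ℂ 2 (@haarAddCircle (1 : ℝ) _) →L[ℂ] Lp ℂ 2 (@haarAddCircle (1 : ℝ) _))
    (hS : ∀ (i : Fin 2) (f : Lp ℂ 2 (@haarAddCircle (1 : ℝ) _)),
      ⇑(S i f) =ᵐ[@haarAddCircle (1 : ℝ) _] fun z => m i z * f (z + z))
    (e₀ : Lp ℂ 2 (@haarAddCircle (1 : ℝ) _))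
    (he₀ : ⇑e₀ =ᵐ[@haarAddCircle (1 : ℝ) _] fun _ => (1 : ℂ)) :
    (∀ (k : ℕ), 1 ≤ k → ∀ i : Fin k → Fin 2,
      ‖a 0‖ ^ (2 * (Finset.univ.filter fun l => i l = 0).card) *
        ‖a (2 * (D : ℤ) - 1)‖ ^ (2 * (Finset.univ.filter fun l => i l = 1).card)
        ≤ ‖adjoint (cuntzWord S i) e₀‖ ^ 2) ∧
    (∀ μ₀ : Measure ℝ,
      (∀ (k : ℕ), 1 ≤ k → ∀ i : Fin k → Fin 2,
        μ₀ (Set.Ico (dyadicVal i) (dyadicVal i + (2⁻¹ : ℝ) ^ k)) =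
          ENNReal.ofReal (‖adjoint (cuntzWord S i) e₀‖ ^ 2)) →
      ∀ (k : ℕ), 1 ≤ k → ∀ i : Fin k → Fin 2,
        ENNReal.ofReal
            (‖a 0‖ ^ (2 * (Finset.univ.filter fun l => i l = 0).card) *
              ‖a (2 * (D : ℤ) - 1)‖ ^
                (2 * (Finset.univ.filter fun l => i l = 1).card))
          ≤ μ₀ (Set.Ico (dyadicVal i) (dyadicVal i + (2⁻¹ : ℝ) ^ k))) :=
  cuntz_wavelet_stmt11_general D hD a m hm₀ hm₁ S hS e₀ he₀
end

section
/- A quadruple (a_0, a_1, a_2, a_3) of real numbers satisfies the three equations a_0² + a_1² + a_2² + a_3² = 1, a_0 a_2 + a_1 a_3 = 0, and a_0 + a_1 + a_2 + a_3 = √2 if and only if there exists β ∈ ℝ such that a_0 = (1 + √2·cos β)/(2√2), a_1 = (1 + √2·sin β)/(2√2), a_2 = (1 − √2·cos β)/(2√2), and a_3 = (1 − √2·sin β)/(2√2). -/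
/-!
In the coordinates `s = a₀ + a₂`, `t = a₁ + a₃`, `u = a₀ - a₂`, `v = a₁ - a₃` the first two
equations say `s² + t² = 1` and `u² + v² = 1`. Together with `s + t = √2` the first circle
meets the line in the single point of tangency `s = t = √2 / 2`, while `(u, v)` is an arbitrary
point `(cos β, sin β)` of the second circle.
-/

open Real

lemma eq_of_add_eq_of_sq_add_sq_eq {s t c : ℝ} (hsum : s + t = 2 * c)
    (hsq : s ^ 2 + t ^ 2 = 2 * c ^ 2) : s = c ∧ t = c := by
  have hdiff : (s - t) ^ 2 = 0 := by linear_combination 2 * hsq - (s + t + 2 * c) * hsum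
  have hst : s = t := sub_eq_zero.mp (pow_eq_zero_iff two_ne_zero |>.mp hdiff)
  constructor <;> linarith

lemma exists_cos_sin_eq_of_sq_add_sq_eq_one {x y : ℝ} (h : x ^ 2 + y ^ 2 = 1) :
    ∃ β : ℝ, cos β = x ∧ sin β = y := by
  set z : ℂ := ⟨x, y⟩
  have hz : ‖z‖ = 1 := by
    rw [Complex.norm_def, Complex.normSq_mk, ← sq, ← sq, h, sqrt_one]
  refine ⟨z.arg, ?_, ?_⟩
  · simpa [hz] using Complex.cos_arg (norm_ne_zero_iff.mp (hz.trans_ne one_ne_zero))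
  · simpa [hz] using Complex.sin_arg z

lemma one_add_sqrt_two_mul_div (x : ℝ) : (1 + √2 * x) / (2 * √2) = √2 / 4 + x / 2 := by
  have h : √2 ^ 2 = 2 := sq_sqrt zero_le_two
  field_simp
  linear_combination -2 * h

lemma one_sub_sqrt_two_mul_div (x : ℝ) : (1 - √2 * x) / (2 * √2) = √2 / 4 - x / 2 := by
  simpa [neg_div, ← sub_eq_add_neg] using one_add_sqrt_two_mul_div (-x)

lemma unit_orthogonal_sum_sqrt_two_iff (a₀ a₁ a₂ a₃ : ℝ) :
    (a₀ ^ 2 + a₁ ^ 2 + a₂ ^ 2 + a₃ ^ 2 = 1 ∧ a₀ * a₂ + a₁ * a₃ = 0 ∧ a₀ + a₁ + a₂ + a₃ = √2) ↔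
      (a₀ + a₂ = √2 / 2 ∧ a₁ + a₃ = √2 / 2 ∧ (a₀ - a₂) ^ 2 + (a₁ - a₃) ^ 2 = 1) := by
  have h2 : √2 ^ 2 = 2 := sq_sqrt zero_le_two
  constructor
  · rintro ⟨hnorm, horth, hsum⟩
    obtain ⟨hs, ht⟩ := eq_of_add_eq_of_sq_add_sq_eq (s := a₀ + a₂) (t := a₁ + a₃) (c := √2 / 2)
      (by linarith) (by linear_combination hnorm + 2 * horth - h2 / 2)
    exact ⟨hs, ht, by linear_combination hnorm - 2 * horth⟩
  · rintro ⟨hs, ht, huv⟩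
    refine ⟨?_, ?_, by linarith⟩
    · linear_combination (a₀ + a₂ + √2 / 2) * hs / 2 + (a₁ + a₃ + √2 / 2) * ht / 2 + huv / 2
        + h2 / 4
    · linear_combination (a₀ + a₂ + √2 / 2) * hs / 4 + (a₁ + a₃ + √2 / 2) * ht / 4 - huv / 4
        + h2 / 8

/-- A quadruple of real numbers satisfies
`a₀² + a₁² + a₂² + a₃² = 1`, `a₀a₂ + a₁a₃ = 0`, `a₀ + a₁ + a₂ + a₃ = √2`
if and only if it is of the form
`a₀ = (1 + √2 cos β)/(2√2)`, `a₁ = (1 + √2 sin β)/(2√2)`,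
`a₂ = (1 − √2 cos β)/(2√2)`, `a₃ = (1 − √2 sin β)/(2√2)` for some `β ∈ ℝ`. -/
theorem cuntz_wavelet_stmt12 (a₀ a₁ a₂ a₃ : ℝ) :
    (a₀ ^ 2 + a₁ ^ 2 + a₂ ^ 2 + a₃ ^ 2 = 1 ∧
      a₀ * a₂ + a₁ * a₃ = 0 ∧
      a₀ + a₁ + a₂ + a₃ = Real.sqrt 2)
    ↔ ∃ β : ℝ,
        a₀ = (1 + Real.sqrt 2 * Real.cos β) / (2 * Real.sqrt 2) ∧
        a₁ = (1 + Real.sqrt 2 * Real.sin β) / (2 * Real.sqrt 2) ∧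
        a₂ = (1 - Real.sqrt 2 * Real.cos β) / (2 * Real.sqrt 2) ∧
        a₃ = (1 - Real.sqrt 2 * Real.sin β) / (2 * Real.sqrt 2) := by
  simp only [unit_orthogonal_sum_sqrt_two_iff, one_add_sqrt_two_mul_div, one_sub_sqrt_two_mul_div]
  constructor
  · rintro ⟨hs, ht, huv⟩
    obtain ⟨β, hcos, hsin⟩ := exists_cos_sin_eq_of_sq_add_sq_eq_one huv
    exact ⟨β, by linarith, by linarith, by linarith, by linarith⟩
  · rintro ⟨β, h₀, h₁, h₂, h₃⟩
    have hu : a₀ - a₂ = cos β := by linarith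
    have hv : a₁ - a₃ = sin β := by linarith
    exact ⟨by linarith, by linarith, by rw [hu, hv, cos_sq_add_sin_sq]⟩
end

section
/- Let F = [[a_0, 0, 0], [a_2, a_1, a_0], [0, a_3, a_2]]. Then: (b) the characteristic polynomial of F is (λ − a_0)(λ − 1/√2)(λ − (sin β − cos β)/2), so the spectrum of F is {a_0, 1/√2, (sin β − cos β)/2}; and (c) for β ∈ (−π, π], the condition a_0 > 1/√2 ≥ max{|λ| : λ an eigenvalue of F, λ ≠ a_0} holds if and only if |β| < π/4. -/
open Real Matrix Polynomial

/-!
Expanding `det (X - F)` along the first row splits off the factor `X - a₀`, leaving the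
quadratic `(X - a₁)(X - a₂) - a₀a₃`. Its roots sum to `a₁ + a₂` and multiply to
`a₁a₂ - a₀a₃`, which for this parametrisation are `1/√2 + (sin β - cos β)/2` and
`(sin β - cos β)/(2√2)`. The third eigenvalue always satisfies `|sin β - cos β| ≤ √2`, so the
dominance condition reduces to `1/√2 < a₀`, i.e. `cos (π/4) < cos β`, and `cos` is strictly
decreasing in `|β|` on `[-π, π]`.
-/

theorem Matrix.charpoly_fin_three_of_row_zero {R : Type*} [CommRing R] (a b c d e f g : R) :
    (!![a, 0, 0; b, c, d; e, f, g]).charpoly =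
      (X - C a) * ((X - C c) * (X - C g) - C (d * f)) := by
  rw [charpoly, det_fin_three]
  simp only [charmatrix_apply_eq, charmatrix_apply_ne, ne_eq, Fin.reduceEq, not_false_eq_true,
    of_apply, cons_val', cons_val_zero, cons_val_one, cons_val, cons_val_fin_one, map_zero,
    map_mul, neg_zero]
  ring

theorem Matrix.spectrum_eq_of_charpoly_eq {K n : Type*} [Field K] [Fintype n] [DecidableEq n]
    (A : Matrix n n K) (x y z : K) (h : A.charpoly = (X - C x) * (X - C y) * (X - C z)) :
    spectrum K A = {x, y, z} := by
  ext r
  simp [mem_spectrum_iff_isRoot_charpoly, h, sub_eq_zero, or_assoc]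

theorem Polynomial.X_sub_C_mul_X_sub_C_sub_C_eq {R : Type*} [CommRing R] {p q r u v : R}
    (hsum : p + q = u + v) (hprod : p * q - r = u * v) :
    (X - C p) * (X - C q) - C r = (X - C u) * (X - C v) := by
  have expand : ∀ s t : R, (X - C s) * (X - C t) = X ^ 2 - C (s + t) * X + C (s * t) := by
    intro s t
    simp only [map_add, map_mul]
    ring
  rw [expand, expand, ← hsum, ← hprod, map_sub]
  ring

theorem Real.abs_sin_sub_cos_le_sqrt_two (β : ℝ) : |sin β - cos β| ≤ √2 :=
  abs_le_sqrt <| by nlinarith [sin_sq_add_cos_sq β, sq_nonneg (sin β + cos β)]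

theorem Real.cos_lt_cos_iff_abs_lt {x y : ℝ} (hx : |x| ≤ π) (hy : |y| ≤ π) :
    cos x < cos y ↔ |y| < |x| := by
  rw [← cos_abs x, ← cos_abs y]
  exact strictAntiOn_cos.lt_iff_gt ⟨abs_nonneg x, hx⟩ ⟨abs_nonneg y, hy⟩

/-- For `a₀, a₁, a₂, a₃` parameterized by `β` as in (22), the matrix
`F = [[a₀,0,0],[a₂,a₁,a₀],[0,a₃,a₂]]` has characteristic polynomial
`(λ − a₀)(λ − 1/√2)(λ − (sin β − cos β)/2)`, hence spectrum
`{a₀, 1/√2, (sin β − cos β)/2}`; and, for `β ∈ (−π, π]`, the dominance condition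
`a₀ > 1/√2 ≥ max{|λ| : λ ∈ spec F, λ ≠ a₀}` holds iff `|β| < π/4`. -/
theorem cuntz_wavelet_stmt13 (β : ℝ)
    (a₀ a₁ a₂ a₃ : ℝ)
    (h₀ : a₀ = (1 + Real.sqrt 2 * Real.cos β) / (2 * Real.sqrt 2))
    (h₁ : a₁ = (1 + Real.sqrt 2 * Real.sin β) / (2 * Real.sqrt 2))
    (h₂ : a₂ = (1 - Real.sqrt 2 * Real.cos β) / (2 * Real.sqrt 2))
    (h₃ : a₃ = (1 - Real.sqrt 2 * Real.sin β) / (2 * Real.sqrt 2))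
    (F : Matrix (Fin 3) (Fin 3) ℝ)
    (hF : F = !![a₀, 0, 0; a₂, a₁, a₀; 0, a₃, a₂]) :
    (F.charpoly =
        (X - C a₀) * (X - C (Real.sqrt 2)⁻¹) *
          (X - C ((Real.sin β - Real.cos β) / 2)) ∧
      spectrum ℝ F = {a₀, (Real.sqrt 2)⁻¹, (Real.sin β - Real.cos β) / 2}) ∧
    (-π < β → β ≤ π →
      (((Real.sqrt 2)⁻¹ < a₀ ∧
          ∀ lam ∈ spectrum ℝ F, lam ≠ a₀ → |lam| ≤ (Real.sqrt 2)⁻¹)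
        ↔ |β| < π / 4)) := by
  have sqrt_two_sq : √2 ^ 2 = 2 := sq_sqrt zero_le_two
  have inv_sqrt_two : (√2)⁻¹ = √2 / 2 := by field_simp; exact sqrt_two_sq.symm
  have hcp : F.charpoly = (X - C a₀) * (X - C (√2)⁻¹) * (X - C ((sin β - cos β) / 2)) := by
    rw [hF, charpoly_fin_three_of_row_zero, mul_assoc]
    congr 1
    apply X_sub_C_mul_X_sub_C_sub_C_eq
    · rw [h₁, h₂, inv_sqrt_two]
      field_simp
      linear_combination (-1 : ℝ) * sqrt_two_sq
    · rw [h₀, h₁, h₂, h₃, inv_sqrt_two]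
      field_simp
      linear_combination -√2 * (sin β - cos β) * sqrt_two_sq
  have hspec := spectrum_eq_of_charpoly_eq F _ _ _ hcp
  refine ⟨⟨hcp, hspec⟩, fun hlo hhi => ?_⟩
  have hrest : ∀ lam ∈ spectrum ℝ F, lam ≠ a₀ → |lam| ≤ (√2)⁻¹ := by
    rw [hspec]
    rintro lam (rfl | rfl | rfl) hne
    · exact absurd rfl hne
    · exact (abs_of_pos (by positivity)).le
    · rw [abs_div, abs_two, inv_sqrt_two]
      gcongr
      exact abs_sin_sub_cos_le_sqrt_two β
  have hβ : |β| ≤ π := abs_le.mpr ⟨hlo.le, hhi⟩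
  have hπ4 : |π / 4| = π / 4 := abs_of_pos (by positivity)
  have ha₀ : (√2)⁻¹ < a₀ ↔ cos (π / 4) < cos β := by
    have sqrt_two_pos : 0 < √2 := by positivity
    rw [h₀, cos_pi_div_four, inv_sqrt_two, lt_div_iff₀ (by positivity)]
    constructor <;> intro h <;> nlinarith
  rw [and_iff_left hrest, ha₀, cos_lt_cos_iff_abs_lt (by linarith [pi_pos]) hβ, hπ4]
end

section
/- Let ξ = i_1/2 + ⋯ + i_k/2^k be a dyadic fraction with digits i_1, …, i_k ∈ {0,1}, and write N_0 = #{j : i_j = 0} and N_1 = #{j : i_j = 1}. Then lim_{n→∞} a_0^{−n}·F_0^n F_{i_k}⋯F_{i_1} e_0 = a_0^{N_0}·a_3^{N_1}·(e_0 + v). Moreover, for every ε with 0 < ε < 1 there exists n_0 ∈ ℕ such that for all n ≥ n_0: (1 + ‖v‖² − ε)·(a_0^{N_0} a_3^{N_1})² ≤ a_0^{−2n}·‖F_0^n F_{i_k}⋯F_{i_1} e_0‖² ≤ (a_0^{N_0} a_3^{N_1})²·(1 + ‖v‖² + ε). -/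
/-!
Both `F₀` and `F₁` have first row a multiple of `e₀ᵀ`, so the first coordinate of
`F_{i_k} ⋯ F_{i_1} e₀` is `P = a₀ ^ N₀ * a₃ ^ N₁`. The vector `e₀ + v` is an eigenvector of `F₀`
for `a₀`, and the remainder `r = F_{i_k} ⋯ F_{i_1} e₀ - P (e₀ + v)` lies in the `F₀`-invariant
plane `x₀ = 0`, on which `F₀` acts as `G`. For `|β| < π/4` the eigenvalues `a₀ + a₂ = 1/√2` and
`a₁ - a₀ = (sin β - cos β)/2` of `G` are distinct and smaller than `a₀` in absolute value, so
`a₀⁻ⁿ F₀ⁿ r → 0`. The norm bounds follow by continuity, since the limit has squared norm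
`P² (1 + ‖v‖²)` with `P ≠ 0`.
-/

open Real Matrix Filter

/-- The matrix word `F_{i_k} ⋯ F_{i_1}` (rightmost factor applied first), real version. -/
noncomputable def matWordR {N : ℕ} (F : Fin N → Matrix (Fin 3) (Fin 3) ℝ) {k : ℕ}
    (i : Fin k → Fin N) : Matrix (Fin 3) (Fin 3) ℝ :=
  ((List.ofFn i).reverse.map F).prod

open Topology Finset

section Recurrence

variable {E : Type*} [AddCommGroup E] [Module ℝ E]

lemma sub_smul_eq_of_recurrence {μ ν : ℝ} {x : ℕ → E}
    (hx : ∀ n, x (n + 2) = (μ + ν) • x (n + 1) - (μ * ν) • x n) (n : ℕ) :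
    (μ - ν) • x n = μ ^ n • (x 1 - ν • x 0) - ν ^ n • (x 1 - μ • x 0) := by
  induction n using Nat.twoStepInduction with
  | zero => simp only [pow_zero, one_smul]; module
  | one => simp only [pow_one]; module
  | more n ih₀ ih₁ =>
    rw [hx, smul_sub, smul_smul, smul_smul, mul_comm (μ - ν), mul_comm (μ - ν), ← smul_smul,
      ← smul_smul, ih₀, ih₁]
    module

variable [TopologicalSpace E] [IsTopologicalAddGroup E] [ContinuousSMul ℝ E]

lemma tendsto_inv_pow_smul_of_recurrence {c μ ν : ℝ} (hμ : |μ| < c) (hν : |ν| < c) (hμν : μ ≠ ν)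
    {x : ℕ → E} (hx : ∀ n, x (n + 2) = (μ + ν) • x (n + 1) - (μ * ν) • x n) :
    Tendsto (fun n ↦ (c ^ n)⁻¹ • x n) atTop (𝓝 0) := by
  have hc : 0 < c := (abs_nonneg μ).trans_lt hμ
  have hclosed : ∀ n, (c ^ n)⁻¹ • x n =
      (μ - ν)⁻¹ • ((μ / c) ^ n • (x 1 - ν • x 0) - (ν / c) ^ n • (x 1 - μ • x 0)) := by
    intro n
    have hμν' : μ - ν ≠ 0 := sub_ne_zero.2 hμν
    calc (c ^ n)⁻¹ • x n = (μ - ν)⁻¹ • (c ^ n)⁻¹ • ((μ - ν) • x n) := by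
          rw [smul_comm, smul_smul _ (μ - ν), inv_mul_cancel₀ hμν', one_smul]
      _ = _ := by rw [sub_smul_eq_of_recurrence hx n, div_pow, div_pow]; module
  have hpow : ∀ {t : ℝ}, |t| < c → Tendsto (fun n ↦ (t / c) ^ n) atTop (𝓝 0) := fun ht ↦
    tendsto_pow_atTop_nhds_zero_of_abs_lt_one <| by rwa [abs_div, abs_of_pos hc, div_lt_one hc]
  simp_rw [hclosed]
  simpa using (((hpow hμ).smul_const (x 1 - ν • x 0)).sub
    ((hpow hν).smul_const (x 1 - μ • x 0))).const_smul (μ - ν)⁻¹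

end Recurrence

lemma Matrix.pow_mulVec_of_mulVec_eq_smul {ι R : Type*} [Fintype ι] [DecidableEq ι] [CommRing R]
    {A : Matrix ι ι R} {c : R} {u : ι → R} (h : A *ᵥ u = c • u) (n : ℕ) :
    (A ^ n) *ᵥ u = c ^ n • u := by
  induction n with
  | zero => simp
  | succ n ih => rw [pow_succ, ← mulVec_mulVec, h, mulVec_smul, ih, smul_smul, pow_succ']

lemma tendsto_inv_pow_smul_pow_mulVec {ι : Type*} [Fintype ι] [DecidableEq ι]
    {A : Matrix ι ι ℝ} {c μ ν : ℝ} (hμ : |μ| < c) (hν : |ν| < c) (hμν : μ ≠ ν) {r : ι → ℝ}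
    (hr : A *ᵥ (A *ᵥ r) = (μ + ν) • A *ᵥ r - (μ * ν) • r) :
    Tendsto (fun n ↦ (c ^ n)⁻¹ • (A ^ n) *ᵥ r) atTop (𝓝 0) :=
  tendsto_inv_pow_smul_of_recurrence hμ hν hμν fun n ↦ by
    simp only [pow_succ, ← mulVec_mulVec, hr, mulVec_sub, mulVec_smul]

lemma Matrix.mulVec_apply_zero_of_row_zero {m : ℕ} {R : Type*} [CommSemiring R]
    {A : Matrix (Fin (m + 1)) (Fin (m + 1)) R} (hA : ∀ j ≠ 0, A 0 j = 0) (x : Fin (m + 1) → R) :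
    (A *ᵥ x) 0 = A 0 0 * x 0 :=
  Fintype.sum_eq_single (0 : Fin (m + 1)) fun j hj ↦ mul_eq_zero_of_left (hA j hj) (x j)

lemma Matrix.list_prod_mulVec_apply_zero {m : ℕ} {R : Type*} [CommSemiring R]
    {l : List (Matrix (Fin (m + 1)) (Fin (m + 1)) R)} (hl : ∀ A ∈ l, ∀ j ≠ 0, A 0 j = 0)
    (x : Fin (m + 1) → R) : (l.prod *ᵥ x) 0 = (l.map (· 0 0)).prod * x 0 := by
  induction l with
  | nil => simp
  | cons A l ih =>
    rw [List.prod_cons, ← mulVec_mulVec, mulVec_apply_zero_of_row_zero (hl A (by simp)),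
      ih (fun B hB ↦ hl B (List.mem_cons_of_mem A hB)), List.map_cons, List.prod_cons, mul_assoc]

lemma matWordR_mulVec_apply_zero {N k : ℕ} {F : Fin N → Matrix (Fin 3) (Fin 3) ℝ}
    (hF : ∀ a, ∀ j ≠ 0, F a 0 j = 0) (i : Fin k → Fin N) (x : Fin 3 → ℝ) :
    (matWordR F i *ᵥ x) 0 = (∏ j, F (i j) 0 0) * x 0 := by
  rw [matWordR, list_prod_mulVec_apply_zero (by simpa using fun j ↦ hF (i j)), List.map_map,
    List.map_reverse, List.prod_reverse, List.map_ofFn, List.prod_ofFn]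
  rfl

lemma Fin.prod_comp_eq_pow_card_mul_pow_card {M : Type*} [CommMonoid M] {k : ℕ} (f : Fin 2 → M)
    (i : Fin k → Fin 2) :
    ∏ j, f (i j) = f 0 ^ #{j | i j = 0} * f 1 ^ #{j | i j = 1} := by
  rw [← Finset.prod_fiberwise' Finset.univ i f, Fin.prod_univ_two, Finset.prod_const,
    Finset.prod_const]

section CuntzF₀

variable {a₀ a₁ a₂ a₃ : ℝ}

def cuntzF₀ (a₀ a₁ a₂ a₃ : ℝ) : Matrix (Fin 3) (Fin 3) ℝ :=
  !![a₀, 0, 0; a₂, a₁, a₀; 0, a₃, a₂]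

lemma cuntzF₀_mulVec_eigenvector {v₂ : Fin 2 → ℝ}
    (hv₂ : (a₀ • (1 : Matrix (Fin 2) (Fin 2) ℝ) - !![a₁, a₀; a₃, a₂]) *ᵥ v₂ = ![a₂, 0]) :
    cuntzF₀ a₀ a₁ a₂ a₃ *ᵥ ![1, v₂ 0, v₂ 1] = a₀ • ![1, v₂ 0, v₂ 1] := by
  rw [sub_mulVec, smul_mulVec, one_mulVec, mulVec_fin_two] at hv₂
  obtain ⟨h₀, h₁⟩ : a₀ * v₂ 0 - (a₁ * v₂ 0 + a₀ * v₂ 1) = a₂ ∧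
      a₀ * v₂ 1 - (a₃ * v₂ 0 + a₂ * v₂ 1) = 0 := by
    simpa [vecHead, vecTail] using hv₂
  ext j
  fin_cases j <;> simp [cuntzF₀, mulVec, dotProduct, Fin.sum_univ_three] <;> linarith

lemma cuntzF₀_mulVec_mulVec (h : a₁ + a₃ = a₀ + a₂) {r : Fin 3 → ℝ} (hr : r 0 = 0) :
    cuntzF₀ a₀ a₁ a₂ a₃ *ᵥ (cuntzF₀ a₀ a₁ a₂ a₃ *ᵥ r) =
      ((a₀ + a₂) + (a₁ - a₀)) • cuntzF₀ a₀ a₁ a₂ a₃ *ᵥ r - ((a₀ + a₂) * (a₁ - a₀)) • r := by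
  have ha₃ : a₃ = a₀ + a₂ - a₁ := by linarith
  ext j
  fin_cases j <;> simp [cuntzF₀, mulVec, dotProduct, Fin.sum_univ_three, hr, ha₃] <;> ring

end CuntzF₀

lemma one_lt_sqrt_two_mul_cos_and_sq_sqrt_two_mul_sin_lt_one {β : ℝ} (hβ : |β| < π / 4) :
    1 < √2 * cos β ∧ (√2 * sin β) ^ 2 < 1 := by
  have hcos : cos (π / 4) < cos β := by
    rw [← cos_abs β]
    exact cos_lt_cos_of_nonneg_of_le_pi (abs_nonneg β) (by linarith [pi_pos]) hβ
  rw [cos_pi_div_four] at hcos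
  have h2 : √2 * √2 = 2 := mul_self_sqrt zero_le_two
  have hc : 1 < √2 * cos β := by nlinarith [sqrt_nonneg 2]
  refine ⟨hc, ?_⟩
  nlinarith [sin_sq_add_cos_sq β]

lemma cuntz_coeff_relations {β a₀ a₁ a₂ a₃ : ℝ} (hβ : |β| < π / 4)
    (h₀ : a₀ = (1 + √2 * cos β) / (2 * √2)) (h₁ : a₁ = (1 + √2 * sin β) / (2 * √2))
    (h₂ : a₂ = (1 - √2 * cos β) / (2 * √2)) (h₃ : a₃ = (1 - √2 * sin β) / (2 * √2)) :
    a₁ + a₃ = a₀ + a₂ ∧ |a₀ + a₂| < a₀ ∧ |a₁ - a₀| < a₀ ∧ a₁ - a₀ < a₀ + a₂ ∧ 0 < a₃ := by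
  obtain ⟨hc, hs⟩ := one_lt_sqrt_two_mul_cos_and_sq_sqrt_two_mul_sin_lt_one hβ
  have hs₁ : |√2 * sin β| < 1 := by rwa [← sq_lt_one_iff_abs_lt_one]
  rw [abs_lt] at hs₁
  have hr : 0 < 2 * √2 := by positivity
  have e₀ : 2 * √2 * a₀ = 1 + √2 * cos β := by rw [h₀]; field_simp
  have e₁ : 2 * √2 * a₁ = 1 + √2 * sin β := by rw [h₁]; field_simp
  have e₂ : 2 * √2 * a₂ = 1 - √2 * cos β := by rw [h₂]; field_simp
  have e₃ : 2 * √2 * a₃ = 1 - √2 * sin β := by rw [h₃]; field_simp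
  have pos : ∀ x, 0 < 2 * √2 * x → 0 < x := fun x hx ↦ pos_of_mul_pos_right hx hr.le
  refine ⟨mul_left_cancel₀ hr.ne' (by linear_combination e₁ + e₃ - e₀ - e₂), abs_lt.2 ⟨?_, ?_⟩,
    abs_lt.2 ⟨?_, ?_⟩, ?_, pos _ (by linarith)⟩
  all_goals rw [← sub_pos]; exact pos _ (by linarith)

lemma tendsto_inv_pow_two_mul_sum_sq {ι : Type*} [Fintype ι] {c : ℝ} {y : ℕ → ι → ℝ}
    {L : ι → ℝ} (h : Tendsto (fun n ↦ (c ^ n)⁻¹ • y n) atTop (𝓝 L)) :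
    Tendsto (fun n ↦ (c ^ (2 * n))⁻¹ * ∑ j, y n j ^ 2) atTop (𝓝 (∑ j, L j ^ 2)) := by
  have hsq : ∀ n, (c ^ (2 * n))⁻¹ * ∑ j, y n j ^ 2 = ∑ j, ((c ^ n)⁻¹ • y n) j ^ 2 := by
    intro n
    simp only [mul_sum, Pi.smul_apply, smul_eq_mul, mul_pow, pow_mul', inv_pow]
  simp_rw [hsq]
  exact tendsto_finsetSum _ fun j _ ↦ ((continuous_apply j).tendsto L |>.comp h).pow 2

/-- For `|β| < π/4` and digits `i₁,…,i_k ∈ {0,1}`, with `N₀ = #{j : i_j = 0}`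
and `N₁ = #{j : i_j = 1}`, one has
`lim_n a₀^{−n} F₀ⁿ F_{i_k}⋯F_{i_1} e₀ = a₀^{N₀} a₃^{N₁} (e₀ + v)`, and for every
`0 < ε < 1` there is `n₀` with
`(1+‖v‖²−ε)(a₀^{N₀}a₃^{N₁})² ≤ a₀^{−2n}‖F₀ⁿF_{i_k}⋯F_{i_1}e₀‖² ≤ (a₀^{N₀}a₃^{N₁})²(1+‖v‖²+ε)`
for all `n ≥ n₀`. -/
theorem cuntz_wavelet_stmt14 (β : ℝ) (hβ : |β| < π / 4)
    (a₀ a₁ a₂ a₃ : ℝ)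
    (h₀ : a₀ = (1 + Real.sqrt 2 * Real.cos β) / (2 * Real.sqrt 2))
    (h₁ : a₁ = (1 + Real.sqrt 2 * Real.sin β) / (2 * Real.sqrt 2))
    (h₂ : a₂ = (1 - Real.sqrt 2 * Real.cos β) / (2 * Real.sqrt 2))
    (h₃ : a₃ = (1 - Real.sqrt 2 * Real.sin β) / (2 * Real.sqrt 2))
    (F : Fin 2 → Matrix (Fin 3) (Fin 3) ℝ)
    (hF₀ : F 0 = !![a₀, 0, 0; a₂, a₁, a₀; 0, a₃, a₂])
    (hF₁ : F 1 = !![a₃, 0, 0; a₁, -a₂, a₃; 0, -a₀, a₁])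
    (v₂ : Fin 2 → ℝ)
    (hv₂ : (a₀ • (1 : Matrix (Fin 2) (Fin 2) ℝ) -
        !![a₁, a₀; a₃, a₂]).mulVec v₂ = ![a₂, 0])
    (v : Fin 3 → ℝ) (hv : v = ![0, v₂ 0, v₂ 1])
    (e₀ : Fin 3 → ℝ) (he₀ : e₀ = ![1, 0, 0])
    (k : ℕ) (i : Fin k → Fin 2)
    (N₀ N₁ : ℕ)
    (hN₀ : N₀ = (Finset.univ.filter fun j => i j = 0).card)
    (hN₁ : N₁ = (Finset.univ.filter fun j => i j = 1).card) :
    Filter.Tendsto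
        (fun n : ℕ => (a₀ ^ n)⁻¹ • ((F 0) ^ n * matWordR F i).mulVec e₀)
        Filter.atTop (nhds ((a₀ ^ N₀ * a₃ ^ N₁) • (e₀ + v))) ∧
    ∀ ε : ℝ, 0 < ε → ε < 1 → ∃ n₀ : ℕ, ∀ n : ℕ, n₀ ≤ n →
      (1 + (∑ j, v j ^ 2) - ε) * (a₀ ^ N₀ * a₃ ^ N₁) ^ 2 ≤
          (a₀ ^ (2 * n))⁻¹ * ∑ j, (((F 0) ^ n * matWordR F i).mulVec e₀ j) ^ 2 ∧
        (a₀ ^ (2 * n))⁻¹ * ∑ j, (((F 0) ^ n * matWordR F i).mulVec e₀ j) ^ 2 ≤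
          (a₀ ^ N₀ * a₃ ^ N₁) ^ 2 * (1 + (∑ j, v j ^ 2) + ε) := by
  obtain ⟨hsum, hlt₀, hlt₁, hlt₂, ha₃⟩ := cuntz_coeff_relations hβ h₀ h₁ h₂ h₃
  have ha₀ : 0 < a₀ := (abs_nonneg _).trans_lt hlt₀
  have hF₀' : F 0 = cuntzF₀ a₀ a₁ a₂ a₃ := hF₀
  set P := a₀ ^ N₀ * a₃ ^ N₁
  set u : Fin 3 → ℝ := ![1, v₂ 0, v₂ 1]
  have hu : e₀ + v = u := by subst he₀ hv; ext j; fin_cases j <;> simp [u]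
  have hWe₀ : (matWordR F i *ᵥ e₀) 0 = P := by
    have hF : ∀ a, ∀ j ≠ 0, F a 0 j = 0 := by
      intro a j hj; fin_cases a <;> fin_cases j <;> simp_all
    rw [matWordR_mulVec_apply_zero hF, Fin.prod_comp_eq_pow_card_mul_pow_card (F · 0 0), hF₀, hF₁]
    simp [he₀, hN₀, hN₁, P]
  set r := matWordR F i *ᵥ e₀ - P • u
  have hsplit : ∀ n, (a₀ ^ n)⁻¹ • ((F 0) ^ n * matWordR F i) *ᵥ e₀ =
      P • u + (a₀ ^ n)⁻¹ • ((F 0) ^ n *ᵥ r) := by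
    intro n
    have hW : matWordR F i *ᵥ e₀ = P • u + r := (add_sub_cancel _ _).symm
    rw [← mulVec_mulVec, hW, mulVec_add, mulVec_smul,
      pow_mulVec_of_mulVec_eq_smul (hF₀' ▸ cuntzF₀_mulVec_eigenvector hv₂), smul_add, smul_smul,
      smul_smul, mul_comm _ P, inv_mul_cancel_right₀ (pow_ne_zero n ha₀.ne')]
  have hlim : Tendsto (fun n ↦ (a₀ ^ n)⁻¹ • ((F 0) ^ n * matWordR F i) *ᵥ e₀) atTop
      (𝓝 (P • (e₀ + v))) := by
    have hr : r 0 = 0 := by simp only [r, Pi.sub_apply, Pi.smul_apply, hWe₀]; simp [u]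
    simpa [hsplit, hu] using tendsto_const_nhds.add <|
      tendsto_inv_pow_smul_pow_mulVec hlt₀ hlt₁ hlt₂.ne' (hF₀' ▸ cuntzF₀_mulVec_mulVec hsum hr)
  refine ⟨hlim, fun ε hε _ ↦ ?_⟩
  have hnorm : ∑ j, (P • (e₀ + v)) j ^ 2 = P ^ 2 * (1 + ∑ j, v j ^ 2) := by
    rw [hu, hv]
    simp only [Fin.sum_univ_three, Pi.smul_apply, smul_eq_mul, u, cons_val_zero, cons_val_one,
      cons_val_two, tail_cons, head_cons]
    ring
  have hP : 0 < P ^ 2 := by positivity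
  obtain ⟨n₀, hn₀⟩ := eventually_atTop.1 <| (tendsto_inv_pow_two_mul_sum_sq hlim).eventually <|
    Icc_mem_nhds (a := (1 + ∑ j, v j ^ 2 - ε) * P ^ 2) (b := P ^ 2 * (1 + ∑ j, v j ^ 2 + ε))
      (by rw [hnorm]; nlinarith) (by rw [hnorm]; nlinarith)
  exact ⟨n₀, fun n hn ↦ hn₀ n hn⟩
end

section
/- There exists a unique ξ ∈ M such that ⟨w, ξ⟩ = 1 and Fξ = a·ξ. Moreover, for every x ∈ M, a^{−n}·F^n x converges to ⟨w, x⟩·ξ as n → ∞. -/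
/-!
Since `F* w = conj a • w`, the hyperplane `w^⊥` is `F`-invariant and contains `range (F - a)`.
Algebraic multiplicity one makes the generalized `a`-eigenspace equal to the eigenspace, so the
Fitting decomposition gives `eigenspace a ⊔ range (F - a) = ⊤`; as `w ≠ 0`, the eigenspace meets
`w^⊥` trivially. Hence the eigenspace is a line `ℂ ξ` with `⟪w, ξ⟫ = 1`, and
`x = ⟪w, x⟫ ξ + y` with `y ∈ w^⊥`. All eigenvalues of `F` on `w^⊥` are smaller than `|a|` in
modulus, so Gelfand's formula gives `a⁻ⁿ Fⁿ y → 0`.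
-/

open Module Filter Topology
open scoped InnerProductSpace

theorem tendsto_pow_atTop_nhds_zero_of_spectralRadius_lt_one {A : Type*} [NormedRing A]
    [NormedAlgebra ℂ A] [CompleteSpace A] {a : A} (h : spectralRadius ℂ a < 1) :
    Tendsto (a ^ ·) atTop (𝓝 0) := by
  obtain ⟨r, hρr, hr1⟩ := ENNReal.lt_iff_exists_nnreal_btwn.mp h
  have hbound : ∀ᶠ n : ℕ in atTop, ‖a ^ n‖ ≤ (r : ℝ) ^ n := by
    filter_upwards [(spectrum.pow_nnnorm_pow_one_div_tendsto_nhds_spectralRadius a)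
      |>.eventually_lt_const hρr, eventually_gt_atTop 0] with n hn hn0
    rw [one_div, ENNReal.rpow_inv_lt_iff (by positivity), ENNReal.rpow_natCast] at hn
    exact_mod_cast hn.le
  exact squeeze_zero_norm' hbound
    (tendsto_pow_atTop_nhds_zero_of_lt_one r.2 (by exact_mod_cast hr1))

namespace Module.End

theorem maxGenEigenspace_sup_range_sub_eq_top {R M : Type*} [CommRing R] [AddCommGroup M]
    [Module R M] [IsNoetherian R M] [IsArtinian R M] (f : End R M) (μ : R) :
    f.maxGenEigenspace μ ⊔ LinearMap.range (f - μ • 1) = ⊤ := by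
  refine top_le_iff.mp ?_
  rw [← codisjoint_iff.mp (LinearMap.isCompl_iSup_ker_pow_iInf_range_pow (f - μ • 1)).codisjoint]
  refine sup_le_sup (iSup_le fun k => ?_) (iInf_le_of_le 1 (pow_one (f - μ • 1) ▸ le_rfl))
  rw [← genEigenspace_nat]
  exact (f.genEigenspace μ).monotone le_top

theorem maxGenEigenspace_eq_eigenspace_of_rootMultiplicity_eq_one {K V : Type*} [Field K]
    [AddCommGroup V] [Module K V] [FiniteDimensional K V] {f : End K V} {μ : K}
    (hμ : f.charpoly.rootMultiplicity μ = 1) : f.maxGenEigenspace μ = f.eigenspace μ := by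
  have hev : f.HasEigenvalue μ := by
    rw [hasEigenvalue_iff_isRoot_charpoly,
      ← Polynomial.rootMultiplicity_pos (LinearMap.charpoly_monic f).ne_zero, hμ]
    exact one_pos
  refine (Submodule.eq_of_le_of_finrank_le ((f.genEigenspace μ).monotone le_top) ?_).symm
  rw [LinearMap.finrank_maxGenEigenspace_eq, hμ]
  exact Submodule.one_le_finrank_iff.mpr hev

variable {E : Type*} [NormedAddCommGroup E] [NormedSpace ℂ E] [FiniteDimensional ℂ E]

theorem tendsto_pow_apply_atTop_nhds_zero (T : End ℂ E)
    (hT : ∀ μ, T.HasEigenvalue μ → ‖μ‖ < 1) (x : E) :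
    Tendsto (fun n : ℕ => (T ^ n) x) atTop (𝓝 0) := by
  set Tc := Module.End.toContinuousLinearMap E T
  have hρ : spectralRadius ℂ Tc < 1 := by
    rcases (spectrum ℂ Tc).eq_empty_or_nonempty with h | h
    · simp [spectralRadius, h]
    · refine spectrum.spectralRadius_lt_of_forall_lt_of_nonempty h (r := 1) fun z hz => ?_
      rw [AlgEquiv.spectrum_eq] at hz
      exact_mod_cast hT z (hasEigenvalue_iff_mem_spectrum.mpr hz)
  have := ((ContinuousLinearMap.apply ℂ E x).continuous.tendsto 0).comp
    (tendsto_pow_atTop_nhds_zero_of_spectralRadius_lt_one hρ)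
  simp only [Function.comp_def, Tc, ← map_pow] at this
  exact this

theorem tendsto_inv_pow_smul_pow_apply_nhds_zero {F : End ℂ E} {a : ℂ} (ha : a ≠ 0)
    {K : Submodule ℂ E} (hK : ∀ x ∈ K, F x ∈ K)
    (hF : ∀ μ : ℂ, ∀ y ∈ K, y ≠ 0 → F y = μ • y → ‖μ‖ < ‖a‖) {x : E} (hx : x ∈ K) :
    Tendsto (fun n : ℕ => (a ^ n)⁻¹ • (F ^ n) x) atTop (𝓝 0) := by
  set T : End ℂ K := a⁻¹ • F.restrict hK
  have hT : ∀ μ, T.HasEigenvalue μ → ‖μ‖ < 1 := by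
    intro μ hμ
    obtain ⟨⟨y, hyK⟩, hy⟩ := hμ.exists_hasEigenvector
    have hFy : F y = (a * μ) • y := by
      have := congrArg ((↑) : K → E) hy.apply_eq_smul
      simp only [T, LinearMap.smul_apply, LinearMap.restrict_apply, Submodule.coe_smul] at this
      rw [mul_smul, ← this, smul_inv_smul₀ ha]
    have := hF (a * μ) y hyK (fun h => hy.2 (Subtype.ext h)) hFy
    rw [norm_mul] at this
    exact (mul_lt_iff_lt_one_right (norm_pos_iff.mpr ha)).mp this
  have hTn : ∀ n : ℕ, ((T ^ n) ⟨x, hx⟩ : E) = (a ^ n)⁻¹ • (F ^ n) x := fun n => by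
    simp only [T, smul_pow, inv_pow, LinearMap.smul_apply, Submodule.coe_smul,
      Module.End.pow_restrict n hK, LinearMap.restrict_apply]
  simpa [Function.comp_def, hTn] using
    (continuous_subtype_val.tendsto 0).comp (T.tendsto_pow_apply_atTop_nhds_zero hT ⟨x, hx⟩)

end Module.End

section AdjointEigenvector

variable {𝕜 E : Type*} [RCLike 𝕜] [NormedAddCommGroup E] [InnerProductSpace 𝕜 E]
  [FiniteDimensional 𝕜 E] {F : End 𝕜 E} {a : 𝕜} {w : E}

theorem inner_apply_eq_mul_inner_of_adjoint_apply_eq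
    (hadj : LinearMap.adjoint F w = (starRingEnd 𝕜) a • w) (y : E) :
    ⟪w, F y⟫_𝕜 = a * ⟪w, y⟫_𝕜 := by
  rw [← LinearMap.adjoint_inner_left, hadj, inner_smul_left, RCLike.conj_conj]

theorem apply_mem_orthogonal_span_singleton_of_adjoint_apply_eq
    (hadj : LinearMap.adjoint F w = (starRingEnd 𝕜) a • w) {y : E} (hy : y ∈ (𝕜 ∙ w)ᗮ) :
    F y ∈ (𝕜 ∙ w)ᗮ := by
  rw [Submodule.mem_orthogonal_singleton_iff_inner_right] at hy ⊢
  rw [inner_apply_eq_mul_inner_of_adjoint_apply_eq hadj, hy, mul_zero]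

theorem range_sub_le_orthogonal_span_singleton
    (hadj : LinearMap.adjoint F w = (starRingEnd 𝕜) a • w) :
    LinearMap.range (F - a • 1) ≤ (𝕜 ∙ w)ᗮ := by
  rintro _ ⟨y, rfl⟩
  rw [Submodule.mem_orthogonal_singleton_iff_inner_right]
  simp [inner_sub_right, inner_smul_right, inner_apply_eq_mul_inner_of_adjoint_apply_eq hadj]

theorem disjoint_eigenspace_orthogonal_span_singleton (hw : w ≠ 0)
    (hmult : F.charpoly.rootMultiplicity a = 1)
    (hadj : LinearMap.adjoint F w = (starRingEnd 𝕜) a • w) :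
    Disjoint (F.eigenspace a) (𝕜 ∙ w)ᗮ := by
  rw [Submodule.disjoint_def]
  intro x hxE hxW
  by_contra hx
  have hEW : F.eigenspace a ≤ (𝕜 ∙ w)ᗮ := by
    refine inf_eq_left.mp (Submodule.eq_of_le_of_finrank_le inf_le_left ?_)
    calc finrank 𝕜 (F.eigenspace a) ≤ 1 := hmult ▸ LinearMap.finrank_eigenspace_le F a
      _ ≤ _ := Submodule.one_le_finrank_iff.mpr
        ((Submodule.ne_bot_iff _).mpr ⟨x, Submodule.mem_inf.mpr ⟨hxE, hxW⟩, hx⟩)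
  have htop := F.maxGenEigenspace_sup_range_sub_eq_top a
  rw [Module.End.maxGenEigenspace_eq_eigenspace_of_rootMultiplicity_eq_one hmult] at htop
  have : (𝕜 ∙ w)ᗮ = ⊤ :=
    top_le_iff.mp (htop ▸ sup_le hEW (range_sub_le_orthogonal_span_singleton hadj))
  rw [Submodule.orthogonal_eq_top_iff, Submodule.span_singleton_eq_bot] at this
  exact hw this

end AdjointEigenvector

theorem tendsto_inv_pow_smul_pow_apply_nhds_inner_smul {M : Type*} [NormedAddCommGroup M]
    [InnerProductSpace ℂ M] [FiniteDimensional ℂ M] {F : End ℂ M} {a : ℂ} {w ξ : M}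
    (ha : a ≠ 0) (hdom : ∀ μ : ℂ, F.HasEigenvalue μ → μ ≠ a → ‖μ‖ < ‖a‖)
    (hadj : LinearMap.adjoint F w = (starRingEnd ℂ) a • w)
    (hdisj : Disjoint (F.eigenspace a) (ℂ ∙ w)ᗮ) (hwξ : ⟪w, ξ⟫_ℂ = 1) (hξ : F ξ = a • ξ)
    (x : M) :
    Tendsto (fun n : ℕ => (a ^ n)⁻¹ • (F ^ n) x) atTop (𝓝 (⟪w, x⟫_ℂ • ξ)) := by
  set y := x - ⟪w, x⟫_ℂ • ξ
  have hy : y ∈ (ℂ ∙ w)ᗮ := by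
    rw [Submodule.mem_orthogonal_singleton_iff_inner_right, inner_sub_right, inner_smul_right,
      hwξ, mul_one, sub_self]
  have hlt : ∀ μ : ℂ, ∀ z ∈ (ℂ ∙ w)ᗮ, z ≠ 0 → F z = μ • z → ‖μ‖ < ‖a‖ := by
    intro μ z hzW hz hFz
    have hzE : z ∈ F.eigenspace μ := Module.End.mem_eigenspace_iff.mpr hFz
    refine hdom μ (Module.End.hasEigenvalue_of_hasEigenvector ⟨hzE, hz⟩) ?_
    rintro rfl
    exact hz (Submodule.disjoint_def.mp hdisj z hzE hzW)
  have hξn (n : ℕ) : (a ^ n)⁻¹ • (F ^ n) ξ = ξ := by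
    rw [(Module.End.hasEigenvector_iff.mpr ⟨Module.End.mem_eigenspace_iff.mpr hξ,
      fun h => by simp [h] at hwξ⟩).pow_apply, inv_smul_smul₀ (pow_ne_zero n ha)]
  convert tendsto_const_nhds.add (Module.End.tendsto_inv_pow_smul_pow_apply_nhds_zero ha
    (fun _ => apply_mem_orthogonal_span_singleton_of_adjoint_apply_eq hadj) hlt hy) using 1
  · ext n
    rw [map_sub, smul_sub, map_smul, smul_comm, hξn, add_sub_cancel]
  · rw [add_zero]

theorem cuntz_wavelet_stmt18_general {M : Type*} [NormedAddCommGroup M]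
    [InnerProductSpace ℂ M] [FiniteDimensional ℂ M]
    (F : Module.End ℂ M) (a : ℂ) (ha : a ≠ 0)
    (hev : Module.End.HasEigenvalue F a)
    (hdom : ∀ lam : ℂ, Module.End.HasEigenvalue F lam → lam ≠ a →
      ‖lam‖ < ‖a‖)
    (hmult : (LinearMap.charpoly F).rootMultiplicity a = 1)
    (w : M) (hw : ‖w‖ = 1)
    (hadj : LinearMap.adjoint (F : M →ₗ[ℂ] M) w = (starRingEnd ℂ) a • w) :
    (∃! ξ : M, (inner ℂ w ξ : ℂ) = 1 ∧ F ξ = a • ξ) ∧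
    (∀ ξ : M, ((inner ℂ w ξ : ℂ) = 1 ∧ F ξ = a • ξ) →
      ∀ x : M, Filter.Tendsto (fun n : ℕ => (a ^ n)⁻¹ • (F ^ n) x)
        Filter.atTop (nhds ((inner ℂ w x : ℂ) • ξ))) := by
  have hdisj := disjoint_eigenspace_orthogonal_span_singleton (by rintro rfl; simp at hw) hmult hadj
  have hkey (x : M) (hx : F x = a • x) (hwx : ⟪w, x⟫_ℂ = 0) : x = 0 :=
    Submodule.disjoint_def.mp hdisj x (Module.End.mem_eigenspace_iff.mpr hx)
      (Submodule.mem_orthogonal_singleton_iff_inner_right.mpr hwx)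
  obtain ⟨v, hv⟩ := hev.exists_hasEigenvector
  have hwv : ⟪w, v⟫_ℂ ≠ 0 := fun h => hv.2 (hkey v hv.apply_eq_smul h)
  refine ⟨⟨(⟪w, v⟫_ℂ)⁻¹ • v, ⟨?_, ?_⟩, fun ξ ⟨hwξ, hξ⟩ => sub_eq_zero.mp (hkey _ ?_ ?_)⟩,
    fun ξ ⟨hwξ, hξ⟩ => tendsto_inv_pow_smul_pow_apply_nhds_inner_smul ha hdom hadj hdisj hwξ hξ⟩
  · rw [inner_smul_right, inv_mul_cancel₀ hwv]
  · rw [map_smul, hv.apply_eq_smul, smul_comm]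
  · rw [map_sub, map_smul, hξ, hv.apply_eq_smul, smul_sub, smul_comm a]
  · rw [inner_sub_right, inner_smul_right, hwξ, inv_mul_cancel₀ hwv, sub_self]

/-- Let `M` be a nonzero finite-dimensional complex inner product
space, `F : M → M` linear, and `a ≠ 0` an eigenvalue of `F` of algebraic multiplicity
one dominating all other eigenvalues in modulus, with a unit vector `w` satisfying
`F* w = conj a • w`.  Then there is a unique `ξ` with `⟪w, ξ⟫ = 1` and `F ξ = a ξ`;
moreover `a^{−n} Fⁿ x → ⟪w, x⟫ ξ` for every `x`. -/
theorem cuntz_wavelet_stmt18 {M : Type*} [NormedAddCommGroup M]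
    [InnerProductSpace ℂ M] [FiniteDimensional ℂ M] [Nontrivial M]
    (F : Module.End ℂ M) (a : ℂ) (ha : a ≠ 0)
    (hev : Module.End.HasEigenvalue F a)
    (hdom : ∀ lam : ℂ, Module.End.HasEigenvalue F lam → lam ≠ a →
      ‖lam‖ < ‖a‖)
    (hmult : (LinearMap.charpoly F).rootMultiplicity a = 1)
    (w : M) (hw : ‖w‖ = 1)
    (hadj : LinearMap.adjoint (F : M →ₗ[ℂ] M) w = (starRingEnd ℂ) a • w) :
    (∃! ξ : M, (inner ℂ w ξ : ℂ) = 1 ∧ F ξ = a • ξ) ∧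
    (∀ ξ : M, ((inner ℂ w ξ : ℂ) = 1 ∧ F ξ = a • ξ) →
      ∀ x : M, Filter.Tendsto (fun n : ℕ => (a ^ n)⁻¹ • (F ^ n) x)
        Filter.atTop (nhds ((inner ℂ w x : ℂ) • ξ))) :=
  cuntz_wavelet_stmt18_general F a ha hev hdom hmult w hw hadj
end
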